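/- arXiv:2211.00711 — 2 statements merged into one kernel-verified Lean document; each statement's English description precedes it below -/
import Mathlib

section
/- Let (R,σ) be an assignment for (G',v₀) with σ(v₀) = ⊥. Then the set S = { u ∈ R ∩ V₁ : σ(u) = ⊥ } satisfies |N_G(S)| < |S|; in particular there exists a set S ⊆ V₁ with |N_G(S)| < |S|. -/
/-!
Setting: `G` is a finite simple graph on `V`, bipartite with bipartition `V₁, V₂`.
The graph `G'` is obtained from `G` by adding a new vertex `v₁` adjacent to every
vertex of `V₁`, and a new vertex `v₀` adjacent only to `v₁`.  The vertices of `G'`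
are encoded by `Option (Option V)`: `none` is `v₀`, `some none` is `v₁`, and
`some (some v)` is the vertex `v` of `G`.
-/

/-- The vertex set of `G'`. -/
abbrev Vext (V : Type) : Type := Option (Option V)

/-- The added vertex `v₀`. -/
def vzero {V : Type} : Vext V := none

/-- The added vertex `v₁`. -/
def vone {V : Type} : Vext V := some none

/-- The embedding of a vertex of `G` into `G'`. -/
def emb {V : Type} (v : V) : Vext V := some (some v)

/-- The graph `G'` obtained from `G` by adding `v₁` adjacent to every vertex of `V₁`
and `v₀` adjacent only to `v₁`. -/
def extGraph {V : Type} (G : SimpleGraph V) (V1 : Set V) : SimpleGraph (Vext V) where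
  Adj x y :=
    match x, y with
    | none, some none => True
    | some none, none => True
    | some none, some (some v) => v ∈ V1
    | some (some v), some none => v ∈ V1
    | some (some u), some (some v) => G.Adj u v
    | _, _ => False
  symm := by
    constructor
    rintro (_ | (_ | x)) (_ | (_ | y)) h <;>
      first
        | exact h
        | exact h.symm
        | exact h.elim
        | trivial
  loopless := by
    constructor
    rintro (_ | (_ | x)) h
    · exact h
    · exact h
    · exact G.loopless.irrefl x h

/-- `(R, σ)` is an assignment for `(G', x₀)`: here `σ x = none` encodes `σ(x) = ⊥`. -/
structure IsAssignment {W : Type} (G' : SimpleGraph W) (x0 : W) (R : Set W)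
    (σ : W → Option W) : Prop where
  /-- `x₀ ∈ R`. -/
  mem : x0 ∈ R
  /-- `(C₁)`: for `v ∈ R`, if `σ v = u ∈ V'` then `u` is adjacent to `v`, `u ∈ R` and
  `σ u = ⊥`. -/
  C1 : ∀ v ∈ R, ∀ u, σ v = some u → G'.Adj v u ∧ u ∈ R ∧ σ u = none
  /-- `(C₂)`: for `v ∈ R`, if `σ v = ⊥` then every neighbour `u` of `v` satisfies `u ∈ R`
  and `σ u ≠ ⊥`. -/
  C2 : ∀ v ∈ R, σ v = none → ∀ u, G'.Adj v u → u ∈ R ∧ σ u ≠ none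
  /-- `(C₃)`, first half: for `v ∈ R`, `|σ⁻¹(v)| ≤ 1`. -/
  C3 : ∀ v ∈ R, {w | σ w = some v}.Subsingleton
  /-- `(C₃)`, second half: `σ⁻¹(x₀) = ∅`. -/
  C3' : ∀ w, σ w ≠ some x0

/-- Auxiliary fuelled definition of the game value of the game `𝒢(G', v₀)`.  A position
consists of the current vertex `cur` together with the list `P` of previously visited
vertices (most recent first); the player to move must choose a vertex `v` not occurring
in the position, adjacent to `cur`; a position is a win for the player to move iff some
legal move leads to a loss for the player to move there.  The fuel is (an upper bound
on) the number of unused vertices, which decreases by one at each move, so that with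
fuel equal to the number of unused vertices this is exactly the well-founded definition
of the game value. -/
def winAux {W : Type} (G' : SimpleGraph W) : ℕ → List W → W → Prop
  | 0, _, _ => False
  | n + 1, P, cur => ∃ v, v ∉ cur :: P ∧ G'.Adj cur v ∧ ¬ winAux G' n (cur :: P) v

/-- The position of `𝒢(G', v₀)` with current vertex `cur` and previously visited
vertices `P` (most recent first) is a win for the player to move. -/
def WinPos {W : Type} [Fintype W] (G' : SimpleGraph W) (P : List W) (cur : W) : Prop :=
  winAux G' {w : W | w ∉ cur :: P}.ncard P cur

/-- The neighbourhood `N_G(S)`: the set of vertices outside `S` adjacent in `G` to some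
vertex of `S`. -/
def nbhd {V : Type} (G : SimpleGraph V) (S : Set V) : Set V :=
  {w | w ∉ S ∧ ∃ u ∈ S, G.Adj u w}


/-!
The vertex `v₁` is forced into `R` with a partner `σ(v₁) = w ∈ V₁`, and `w ∈ S`. Every
`x ∈ N_G(S)` is a neighbour of some `a ∈ S`, so by `(C₂)` it is assigned, and by `(C₁)` and
bipartiteness its partner `σ(x)` lies in `S`. By `(C₃)` distinct vertices have distinct
partners, and none of them is `w`, which is already the partner of `v₁`. Hence `σ` injects
`N_G(S)` into `S \ {w}`.
-/

theorem Set.ncard_le_ncard_of_forall_subsingleton {α β : Type*} {s : Set α} {t : Set β}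
    (r : α → β → Prop) (hs : ∀ a ∈ s, ∃ b ∈ t, r a b)
    (ht : ∀ b ∈ t, {a | a ∈ s ∧ r a b}.Subsingleton) (hsf : s.Finite) (htf : t.Finite) :
    s.ncard ≤ t.ncard := by
  obtain ⟨s, rfl⟩ := hsf.exists_finset_coe
  obtain ⟨t, rfl⟩ := htf.exists_finset_coe
  simp only [Set.ncard_coe_finset]
  exact Finset.card_le_card_of_forall_subsingleton r hs ht

lemma emb_injective {V : Type} : Function.Injective (emb (V := V)) :=
  (Option.some_injective _).comp (Option.some_injective _)

lemma notMem_of_adj_of_mem {V : Type} {G : SimpleGraph V} {V1 V2 : Set V}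
    (hdisj : Disjoint V1 V2)
    (hbip : ∀ ⦃u w : V⦄, G.Adj u w → (u ∈ V1 ∧ w ∈ V2) ∨ (u ∈ V2 ∧ w ∈ V1))
    {u w : V} (hu : u ∈ V1) (huw : G.Adj u w) : w ∉ V1 := by
  rcases hbip huw with ⟨_, hw⟩ | ⟨hu', _⟩
  · exact Set.disjoint_right.mp hdisj hw
  · exact absurd hu' (Set.disjoint_left.mp hdisj hu)

def unassignedIn {V : Type} (V1 : Set V) (R : Set (Vext V)) (σ : Vext V → Option (Vext V)) :
    Set V :=
  {u | emb u ∈ R ∧ u ∈ V1 ∧ σ (emb u) = none}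

namespace IsAssignment

variable {V : Type} {G : SimpleGraph V} {V1 : Set V} {R : Set (Vext V)}
  {σ : Vext V → Option (Vext V)}

lemma exists_sigma_vone_eq (hA : IsAssignment (extGraph G V1) vzero R σ)
    (h : σ vzero = none) : ∃ w ∈ unassignedIn V1 R σ, σ vone = some (emb w) := by
  obtain ⟨hvoneR, hvone⟩ := hA.C2 vzero hA.mem h vone trivial
  obtain ⟨u, hu⟩ := Option.ne_none_iff_exists'.mp hvone
  obtain ⟨hadj, huR, huσ⟩ := hA.C1 vone hvoneR u hu
  match u, hadj with
  | none, _ => exact absurd hu (hA.C3' vone)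
  | some none, hadj => exact hadj.elim
  | some (some w), hw => exact ⟨w, ⟨huR, hw, huσ⟩, hu⟩

lemma exists_sigma_eq_of_mem_nbhd {V2 : Set V} (hA : IsAssignment (extGraph G V1) vzero R σ)
    (hdisj : Disjoint V1 V2)
    (hbip : ∀ ⦃u w : V⦄, G.Adj u w → (u ∈ V1 ∧ w ∈ V2) ∨ (u ∈ V2 ∧ w ∈ V1))
    {x : V} (hx : x ∈ nbhd G (unassignedIn V1 R σ)) :
    ∃ z ∈ unassignedIn V1 R σ, σ (emb x) = some (emb z) := by
  obtain ⟨-, a, ⟨haR, haV1, haσ⟩, hax⟩ := hx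
  have hxV1 : x ∉ V1 := notMem_of_adj_of_mem hdisj hbip haV1 hax
  obtain ⟨hxR, hxσ⟩ := hA.C2 (emb a) haR haσ (emb x) hax
  obtain ⟨y, hy⟩ := Option.ne_none_iff_exists'.mp hxσ
  obtain ⟨hadj, hyR, hyσ⟩ := hA.C1 (emb x) hxR y hy
  match y, hadj with
  | none, hadj => exact hadj.elim
  | some none, hadj => exact absurd hadj hxV1
  | some (some z), hxz =>
    have hzV1 : z ∈ V1 := ((hbip hxz).resolve_left fun h ↦ hxV1 h.1).2
    exact ⟨z, ⟨hyR, hzV1, hyσ⟩, hy⟩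

lemma subsingleton_sigma_eq_emb (hA : IsAssignment (extGraph G V1) vzero R σ) {z : V}
    (hz : emb z ∈ R) : {x | σ (emb x) = some (emb z)}.Subsingleton :=
  fun _ hx _ hx' ↦ emb_injective (hA.C3 (emb z) hz hx hx')

lemma ncard_nbhd_unassignedIn_lt {V2 : Set V} [Finite V]
    (hA : IsAssignment (extGraph G V1) vzero R σ) (hdisj : Disjoint V1 V2)
    (hbip : ∀ ⦃u w : V⦄, G.Adj u w → (u ∈ V1 ∧ w ∈ V2) ∨ (u ∈ V2 ∧ w ∈ V1))
    (h : σ vzero = none) :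
    (nbhd G (unassignedIn V1 R σ)).ncard < (unassignedIn V1 R σ).ncard := by
  set S := unassignedIn V1 R σ
  obtain ⟨w, hwS, hw⟩ := hA.exists_sigma_vone_eq h
  have hmaps : ∀ x ∈ nbhd G S, ∃ z ∈ S \ {w}, σ (emb x) = some (emb z) := by
    intro x hx
    obtain ⟨z, hzS, hz⟩ := hA.exists_sigma_eq_of_mem_nbhd hdisj hbip hx
    refine ⟨z, ⟨hzS, ?_⟩, hz⟩
    rintro rfl
    exact Option.some_ne_none x (Option.some.inj (hA.C3 (emb z) hzS.1 hz hw))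
  calc (nbhd G S).ncard
      ≤ (S \ {w}).ncard :=
        Set.ncard_le_ncard_of_forall_subsingleton _ hmaps
          (fun z hz ↦ (hA.subsingleton_sigma_eq_emb hz.1.1).anti fun _ hx ↦ hx.2)
          (Set.toFinite _) (Set.toFinite _)
    _ < S.ncard := Set.ncard_sdiff_singleton_lt_of_mem hwS (Set.toFinite _)

end IsAssignment

theorem stmt3_general {V : Type} [Fintype V] (G : SimpleGraph V) (V1 V2 : Set V)
    (hdisj : Disjoint V1 V2)
    (hbip : ∀ ⦃u w : V⦄, G.Adj u w → (u ∈ V1 ∧ w ∈ V2) ∨ (u ∈ V2 ∧ w ∈ V1))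
    (R : Set (Vext V)) (σ : Vext V → Option (Vext V))
    (hA : IsAssignment (extGraph G V1) vzero R σ)
    (h : σ vzero = none) :
    (nbhd G {u : V | emb u ∈ R ∧ u ∈ V1 ∧ σ (emb u) = none}).ncard
        < {u : V | emb u ∈ R ∧ u ∈ V1 ∧ σ (emb u) = none}.ncard ∧
    ∃ S ⊆ V1, (nbhd G S).ncard < S.ncard := by
  have hlt := hA.ncard_nbhd_unassignedIn_lt hdisj hbip h
  exact ⟨hlt, unassignedIn V1 R σ, fun _ hu ↦ hu.2.1, hlt⟩

/-- Let `(R, σ)` be an assignment for `(G', v₀)` with `σ(v₀) = ⊥`.  Then the set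
`S = { u ∈ R ∩ V₁ : σ(u) = ⊥ }` satisfies `|N_G(S)| < |S|`; in particular there exists
a set `S ⊆ V₁` with `|N_G(S)| < |S|`. -/
theorem stmt3 {V : Type} [Fintype V] (G : SimpleGraph V) (V1 V2 : Set V)
    (hcover : V1 ∪ V2 = Set.univ) (hdisj : Disjoint V1 V2)
    (hbip : ∀ ⦃u w : V⦄, G.Adj u w → (u ∈ V1 ∧ w ∈ V2) ∨ (u ∈ V2 ∧ w ∈ V1))
    (R : Set (Vext V)) (σ : Vext V → Option (Vext V))
    (hA : IsAssignment (extGraph G V1) vzero R σ)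
    (h : σ vzero = none) :
    (nbhd G {u : V | emb u ∈ R ∧ u ∈ V1 ∧ σ (emb u) = none}).ncard
        < {u : V | emb u ∈ R ∧ u ∈ V1 ∧ σ (emb u) = none}.ncard ∧
    ∃ S ⊆ V1, (nbhd G S).ncard < S.ncard :=
  stmt3_general G V1 V2 hdisj hbip R σ hA h
end

section
/- For every finite simple bipartite graph G with bipartition V₁, V₂, and for the pair (G',v₀) derived from G, there exists an assignment (R,σ) for (G',v₀). -/
/-!
Choose `A ⊆ V₁` of maximal Hall deficiency `|A| - |N(A)|`. If that deficiency is `0`, Hall's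
theorem matches `V₁` into `V₂`; let `σ` send `v₀ ↦ v₁` and each `a ∈ V₁` to its partner, with
`v₁` and the partners as the `⊥`-vertices. Otherwise maximality gives Hall's condition for
matching `N(A)` back into `A`, and since `|N(A)| < |A|` some `a₀ ∈ A` is missed; let `σ` send
`v₁ ↦ a₀` and `N(A)` into `A`, with `v₀` and `A` as the `⊥`-vertices. Bipartiteness makes every
neighbour of a `⊥`-vertex a matched vertex, which is all an assignment needs.
-/

namespace SimpleGraph

variable {V : Type*} [Fintype V] (G : SimpleGraph V) [DecidableRel G.Adj]

open Finset

def neighborhood (A : Finset V) : Finset V := {b | ∃ a ∈ A, G.Adj a b}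

@[simp]
theorem mem_neighborhood {A : Finset V} {b : V} : b ∈ G.neighborhood A ↔ ∃ a ∈ A, G.Adj a b := by
  simp [neighborhood]

def deficiency (A : Finset V) : ℤ := #A - #(G.neighborhood A)

variable [DecidableEq V]

theorem exists_injOn_adj_of_forall_card_le (S X : Finset V)
    (hall : ∀ B ⊆ S, #B ≤ #(G.neighborhood B ∩ X)) :
    ∃ g : V → V, Set.InjOn g S ∧ ∀ a ∈ S, G.Adj a (g a) ∧ g a ∈ X := by
  obtain ⟨f, hf_inj, hf⟩ := (Fintype.all_card_le_filter_rel_iff_exists_injective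
    (fun (a : S) b => G.Adj a b ∧ b ∈ X)).1 fun B => by
      have hnbhd : ({b | ∃ a ∈ B, G.Adj a b ∧ b ∈ X} : Finset V) =
          G.neighborhood (B.map (Function.Embedding.subtype _)) ∩ X := by
        ext b; simp only [mem_filter, mem_univ, true_and, mem_inter, mem_neighborhood]; aesop
      rw [hnbhd, ← Finset.card_map (Function.Embedding.subtype _)]
      exact hall _ fun a ha => by obtain ⟨⟨a, haS⟩, -, rfl⟩ := Finset.mem_map.1 ha; exact haS
  refine ⟨fun a => if ha : a ∈ S then f ⟨a, ha⟩ else a, ?_,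
    fun a ha => by simpa [ha] using hf ⟨a, ha⟩⟩
  intro a ha b hb hab
  simp only [Finset.mem_coe] at ha hb
  exact congrArg Subtype.val (hf_inj (by simpa [ha, hb] using hab))

/-- If `T` had more vertices, `A \ N(T)` would have larger deficiency than `A`. -/
theorem card_le_card_neighborhood_inter_of_maximal {A T : Finset V}
    (hmax : ∀ A' ⊆ A, G.deficiency A' ≤ G.deficiency A) (hT : T ⊆ G.neighborhood A) :
    #T ≤ #(G.neighborhood T ∩ A) := by
  set A' := A \ G.neighborhood T
  have hA' : #A' + #(G.neighborhood T ∩ A) = #A := by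
    rw [Finset.card_sdiff, Nat.sub_add_cancel (Finset.card_le_card Finset.inter_subset_right)]
  have hN : G.neighborhood A' ⊆ G.neighborhood A \ T := by
    intro b hb
    obtain ⟨a, ha, hab⟩ := G.mem_neighborhood.1 hb
    obtain ⟨haA, haT⟩ := Finset.mem_sdiff.1 ha
    refine Finset.mem_sdiff.2 ⟨G.mem_neighborhood.2 ⟨a, haA, hab⟩, fun hbT => haT ?_⟩
    exact G.mem_neighborhood.2 ⟨b, hbT, hab.symm⟩
  have hcard := Finset.card_le_card hN
  rw [Finset.card_sdiff_of_subset hT] at hcard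
  have := hmax A' Finset.sdiff_subset
  have := Finset.card_le_card hT
  simp only [deficiency] at *
  omega

theorem exists_saturating_matching_or_deficient (S : Finset V) :
    (∃ g : V → V, Set.InjOn g S ∧ ∀ a ∈ S, G.Adj a (g a)) ∨
    ∃ A ⊆ S, ∃ a₀ ∈ A, ∃ f : V → V, Set.InjOn f (G.neighborhood A) ∧
      ∀ b ∈ G.neighborhood A, G.Adj b (f b) ∧ f b ∈ A ∧ f b ≠ a₀ := by
  obtain ⟨A, hAS, hmax⟩ :=
    Finset.exists_max_image S.powerset G.deficiency ⟨∅, Finset.empty_mem_powerset S⟩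
  rw [Finset.mem_powerset] at hAS
  by_cases hdef : G.deficiency A ≤ 0
  · left
    obtain ⟨g, hg_inj, hg⟩ := G.exists_injOn_adj_of_forall_card_le S Finset.univ fun B hB => by
      have := (hmax B (Finset.mem_powerset.2 hB)).trans hdef
      simp only [deficiency, Finset.inter_univ] at this ⊢
      omega
    exact ⟨g, hg_inj, fun a ha => (hg a ha).1⟩
  · right
    obtain ⟨f, hf_inj, hf⟩ := G.exists_injOn_adj_of_forall_card_le _ A fun T hT =>
      G.card_le_card_neighborhood_inter_of_maximal
        (fun A' hA' => hmax A' (Finset.mem_powerset.2 (hA'.trans hAS))) hT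
    have hcard : #((G.neighborhood A).image f) < #A := by
      have := Finset.card_image_le (s := G.neighborhood A) (f := f)
      simp only [deficiency] at hdef
      omega
    obtain ⟨a₀, ha₀, ha₀f⟩ := Finset.exists_mem_notMem_of_card_lt_card hcard
    refine ⟨A, hAS, a₀, ha₀, f, hf_inj, fun b hb => ⟨(hf b hb).1, (hf b hb).2, ?_⟩⟩
    rintro rfl
    exact ha₀f (Finset.mem_image_of_mem f hb)

end SimpleGraph

open Classical in
theorem IsAssignment.of_matching {W : Type} {G' : SimpleGraph W} {x0 : W} {D B : Set W}
    {m : W → W} (hx0 : x0 ∈ D ∪ B)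
    (hDB : Disjoint D B) (hadj : ∀ v ∈ D, G'.Adj v (m v)) (hmaps : Set.MapsTo m D B)
    (hinj : Set.InjOn m D) (hm : ∀ v ∈ D, m v ≠ x0) (hB : ∀ v ∈ B, ∀ u, G'.Adj v u → u ∈ D) :
    IsAssignment G' x0 (D ∪ B) (fun v => if v ∈ D then some (m v) else none) where
  mem := hx0
  C1 v _ u hu := by
    obtain ⟨hv, rfl⟩ := Option.ite_some_none_eq_some.1 hu
    exact ⟨hadj v hv, Or.inr (hmaps hv), if_neg (Set.disjoint_right.1 hDB (hmaps hv))⟩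
  C2 v hv hσ u hu := by
    have hvB : v ∈ B := hv.resolve_left fun hvD => by simp [hvD] at hσ
    have huD := hB v hvB u hu
    exact ⟨Or.inl huD, by simp [huD]⟩
  C3 v _ w₁ hw₁ w₂ hw₂ := by
    obtain ⟨h₁, rfl⟩ := Option.ite_some_none_eq_some.1 hw₁
    obtain ⟨h₂, h⟩ := Option.ite_some_none_eq_some.1 hw₂
    exact hinj h₁ h₂ h.symm
  C3' w hw := by
    obtain ⟨h, hw⟩ := Option.ite_some_none_eq_some.1 hw
    exact hm w h hw

section ExtGraph

variable {V : Type} {G : SimpleGraph V} {V1 : Set V}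

@[simp] theorem emb_inj {u v : V} : emb u = emb v ↔ u = v := Option.some_inj.trans Option.some_inj

@[simp] theorem emb_ne_vzero (v : V) : emb v ≠ vzero := Option.some_ne_none _

@[simp] theorem emb_ne_vone (v : V) : emb v ≠ vone :=
  fun h => Option.some_ne_none _ (Option.some_inj.1 h)

@[simp] theorem vone_ne_vzero : (vone : Vext V) ≠ vzero := Option.some_ne_none _

@[simp] theorem vzero_ne_vone : (vzero : Vext V) ≠ vone := vone_ne_vzero.symm

@[simp] theorem extGraph_adj_vzero_vone : (extGraph G V1).Adj vzero vone := trivial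

@[simp] theorem extGraph_adj_vone_emb {v : V} : (extGraph G V1).Adj vone (emb v) ↔ v ∈ V1 :=
  Iff.rfl

theorem extGraph_adj_vzero {x : Vext V} : (extGraph G V1).Adj vzero x ↔ x = vone := by
  rcases x with _ | _ | v <;> simp [extGraph, vzero, vone]

theorem extGraph_adj_vone {x : Vext V} :
    (extGraph G V1).Adj vone x ↔ x = vzero ∨ ∃ v ∈ V1, x = emb v := by
  rcases x with _ | _ | v <;> simp [extGraph, vzero, vone, emb]

theorem extGraph_adj_emb {u : V} {x : Vext V} :
    (extGraph G V1).Adj (emb u) x ↔ (x = vone ∧ u ∈ V1) ∨ ∃ v, G.Adj u v ∧ x = emb v := by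
  rcases x with _ | _ | v <;> simp [extGraph, vone, emb]

theorem exists_isAssignment_of_saturating_matching (hside : ∀ ⦃u w⦄, G.Adj u w → (u ∈ V1 ↔ w ∉ V1))
    {g : V → V} (hg_inj : Set.InjOn g V1) (hg : ∀ a ∈ V1, G.Adj a (g a)) :
    ∃ R σ, IsAssignment (extGraph G V1) vzero R σ := by
  have hgV1 : ∀ a ∈ V1, g a ∉ V1 := fun a ha => (hside (hg a ha)).1 ha
  let m : Vext V → Vext V := fun | some (some v) => emb (g v) | _ => vone
  have hm_vzero : m vzero = vone := rfl
  have hm_emb (v : V) : m (emb v) = emb (g v) := rfl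
  refine ⟨_, _, IsAssignment.of_matching (D := insert vzero (emb '' V1))
    (B := insert vone (emb '' (g '' V1))) (m := m) (by simp) ?_ ?_ ?_ ?_ ?_ ?_⟩
  · refine Set.disjoint_left.2 ?_
    rintro x (rfl | ⟨a, ha, rfl⟩) (h | ⟨_, ⟨b, hb, rfl⟩, h⟩)
    all_goals simp at h
    exact hgV1 b hb (h ▸ ha)
  · rintro v (rfl | ⟨a, ha, rfl⟩)
    exacts [extGraph_adj_vzero_vone, hg a ha]
  · rintro v (rfl | ⟨a, ha, rfl⟩)
    exacts [Set.mem_insert _ _, Or.inr ⟨g a, ⟨a, ha, rfl⟩, rfl⟩]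
  · rintro v (rfl | ⟨a, ha, rfl⟩) w (rfl | ⟨b, hb, rfl⟩) h
    all_goals simp only [hm_vzero, hm_emb, emb_inj, emb_ne_vone, (emb_ne_vone _).symm] at h ⊢
    exact hg_inj ha hb h
  · rintro (_ | _ | v) _ <;> simp [m]
  · rintro v (rfl | ⟨_, ⟨a, ha, rfl⟩, rfl⟩) u hu
    · rcases extGraph_adj_vone.1 hu with rfl | ⟨c, hc, rfl⟩
      exacts [Set.mem_insert _ _, Or.inr ⟨c, hc, rfl⟩]
    · rcases extGraph_adj_emb.1 hu with ⟨-, h⟩ | ⟨c, hc, rfl⟩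
      · exact (hgV1 a ha h).elim
      · exact Or.inr ⟨c, not_not.1 fun hc' => hgV1 a ha ((hside hc).2 hc'), rfl⟩

theorem exists_isAssignment_of_deficient (hside : ∀ ⦃u w⦄, G.Adj u w → (u ∈ V1 ↔ w ∉ V1))
    {A : Set V} (hA : A ⊆ V1) {a₀ : V} (ha₀ : a₀ ∈ A) {f : V → V}
    (hf_inj : Set.InjOn f {b | ∃ a ∈ A, G.Adj a b})
    (hf : ∀ b ∈ {b | ∃ a ∈ A, G.Adj a b}, G.Adj b (f b) ∧ f b ∈ A ∧ f b ≠ a₀) :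
    ∃ R σ, IsAssignment (extGraph G V1) vzero R σ := by
  let m : Vext V → Vext V := fun | some (some v) => emb (f v) | _ => emb a₀
  have hm_vone : m vone = emb a₀ := rfl
  have hm_emb (v : V) : m (emb v) = emb (f v) := rfl
  refine ⟨_, _, IsAssignment.of_matching (D := insert vone (emb '' {b | ∃ a ∈ A, G.Adj a b}))
    (B := insert vzero (emb '' A)) (m := m) (by simp) ?_ ?_ ?_ ?_ ?_ ?_⟩
  · refine Set.disjoint_left.2 ?_
    rintro x (rfl | ⟨b, ⟨a, ha, hab⟩, rfl⟩) (h | ⟨c, hc, h⟩)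
    all_goals simp at h
    subst h
    exact (hside hab).1 (hA ha) (hA hc)
  · rintro v (rfl | ⟨b, hb, rfl⟩)
    exacts [extGraph_adj_vone_emb.2 (hA ha₀), (hf b hb).1]
  · rintro v (rfl | ⟨b, hb, rfl⟩)
    exacts [Or.inr ⟨a₀, ha₀, rfl⟩, Or.inr ⟨f b, (hf b hb).2.1, rfl⟩]
  · rintro v (rfl | ⟨b, hb, rfl⟩) w (rfl | ⟨c, hc, rfl⟩) h
    all_goals simp only [hm_vone, hm_emb, emb_inj] at h
    · rfl
    · exact ((hf c hc).2.2 h.symm).elim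
    · exact ((hf b hb).2.2 h).elim
    · exact congrArg emb (hf_inj hb hc h)
  · rintro (_ | _ | v) _ <;> simp [m]
  · rintro v (rfl | ⟨a, ha, rfl⟩) u hu
    · exact extGraph_adj_vzero.1 hu ▸ Set.mem_insert _ _
    · rcases extGraph_adj_emb.1 hu with ⟨rfl, -⟩ | ⟨c, hc, rfl⟩
      exacts [Set.mem_insert _ _, Or.inr ⟨c, ⟨a, ha, hc⟩, rfl⟩]

end ExtGraph

theorem mem_iff_notMem_of_adj {V : Type} {G : SimpleGraph V} {V1 V2 : Set V}
    (hdisj : Disjoint V1 V2)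
    (hbip : ∀ ⦃u w : V⦄, G.Adj u w → (u ∈ V1 ∧ w ∈ V2) ∨ (u ∈ V2 ∧ w ∈ V1)) {u w : V}
    (h : G.Adj u w) : u ∈ V1 ↔ w ∉ V1 := by
  rcases hbip h with ⟨hu, hw⟩ | ⟨hu, hw⟩
  · exact iff_of_true hu (Set.disjoint_right.1 hdisj hw)
  · exact iff_of_false (Set.disjoint_right.1 hdisj hu) (not_not.2 hw)

theorem stmt4_general {V : Type} [Fintype V] (G : SimpleGraph V) (V1 V2 : Set V)
    (hdisj : Disjoint V1 V2)
    (hbip : ∀ ⦃u w : V⦄, G.Adj u w → (u ∈ V1 ∧ w ∈ V2) ∨ (u ∈ V2 ∧ w ∈ V1)) :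
    ∃ (R : Set (Vext V)) (σ : Vext V → Option (Vext V)),
      IsAssignment (extGraph G V1) vzero R σ := by
  classical
  have hside : ∀ ⦃u w⦄, G.Adj u w → (u ∈ V1 ↔ w ∉ V1) := fun _ _ =>
    mem_iff_notMem_of_adj hdisj hbip
  rcases G.exists_saturating_matching_or_deficient V1.toFinset with
    ⟨g, hg_inj, hg⟩ | ⟨A, hA, a₀, ha₀, f, hf_inj, hf⟩
  · exact exists_isAssignment_of_saturating_matching hside (by simpa using hg_inj) (by simpa using hg)
  · have hN : (G.neighborhood A : Set V) = {b | ∃ a ∈ (A : Set V), G.Adj a b} := by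
      ext; simp
    rw [hN] at hf_inj
    exact exists_isAssignment_of_deficient hside (by simpa [Set.subset_def] using hA) ha₀
      hf_inj (by simpa using hf)

/-- For every finite simple bipartite graph `G` with bipartition `V₁, V₂`, and for the
pair `(G', v₀)` derived from `G`, there exists an assignment `(R, σ)` for `(G', v₀)`. -/
theorem stmt4 {V : Type} [Fintype V] (G : SimpleGraph V) (V1 V2 : Set V)
    (hcover : V1 ∪ V2 = Set.univ) (hdisj : Disjoint V1 V2)
    (hbip : ∀ ⦃u w : V⦄, G.Adj u w → (u ∈ V1 ∧ w ∈ V2) ∨ (u ∈ V2 ∧ w ∈ V1)) :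
    ∃ (R : Set (Vext V)) (σ : Vext V → Option (Vext V)),
      IsAssignment (extGraph G V1) vzero R σ :=
  stmt4_general G V1 V2 hdisj hbip
end
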